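/- arXiv:2510.06073 — 4 statements merged into one kernel-verified Lean document; each statement's English description precedes it below -/
import Mathlib

section
/- For any positive rational number n/m with n, m prime, and any integer N0 ≥ 2, there exists a sequence of pairs of coprime positive integers (n_k, m_k) with n_k ≥ 2, m_k ≥ N0, n_k + m_k ≡ 0, 1, or 2 (mod 5), such that n_k/m_k converges to n/m. In particular, the set of rationals n/m with n, m coprime, n ≥ 2, m ≥ N0 and (n+m) mod 5 ≤ 2 is dense in (0, ∞). -/
/-!
Take the denominator `b` to be a large prime. Then every numerator `a` not divisible by `b` is
coprime to `b`, and among the two consecutive integers `a ≡ -b` and `a ≡ 1 - b (mod 5)` just above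
`x * b` at least one is not a multiple of `b`. This gives an admissible `a / b` within `6 / b`
of `x`, so every `x > 0`, and hence by closedness every `x ≥ 0`, is a limit of admissible ratios.
-/

open Filter Set

def admissibleRatios (N0 : ℕ) : Set ℝ :=
  {q | ∃ a b : ℕ, Nat.Coprime a b ∧ 2 ≤ a ∧ N0 ≤ b ∧ (a + b) % 5 ≤ 2 ∧ q = (a : ℝ) / (b : ℝ)}

lemma Nat.Prime.exists_coprime_mod_five_le_two {b : ℕ} (hb : b.Prime) (c : ℕ) :
    ∃ a, c ≤ a ∧ a ≤ c + 5 ∧ Nat.Coprime a b ∧ (a + b) % 5 ≤ 2 := by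
  set a₀ := c + (5 - (c + b) % 5) % 5
  have ha₀ : (a₀ + b) % 5 = 0 := by omega
  by_cases hdvd : b ∣ a₀
  · have hndvd : ¬ b ∣ a₀ + 1 := fun h =>
      hb.one_lt.ne' (Nat.dvd_one.mp ((Nat.dvd_add_right hdvd).mp h))
    exact ⟨a₀ + 1, by omega, by omega, ((hb.coprime_iff_not_dvd).2 hndvd).symm, by omega⟩
  · exact ⟨a₀, by omega, by omega, ((hb.coprime_iff_not_dvd).2 hdvd).symm, by omega⟩

lemma exists_mem_admissibleRatios_dist_lt (N0 : ℕ) {x ε : ℝ} (hx : 0 < x) (hε : 0 < ε) :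
    ∃ q ∈ admissibleRatios N0, dist q x < ε := by
  obtain ⟨B, hB⟩ := exists_nat_gt (max (6 / ε) (1 / x))
  obtain ⟨b, hBb, hb⟩ := Nat.exists_infinite_primes (max B N0)
  have hb_pos : (0 : ℝ) < b := Nat.cast_pos.mpr hb.pos
  have hBb' : (B : ℝ) ≤ b := by exact_mod_cast (le_max_left B N0).trans hBb
  have h6 : 6 < ε * b := by
    have := (le_max_left _ _).trans_lt (hB.trans_le hBb')
    rwa [div_lt_iff₀ hε, mul_comm] at this
  have h1 : 1 < x * b := by
    have := (le_max_right _ _).trans_lt (hB.trans_le hBb')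
    rwa [div_lt_iff₀ hx, mul_comm] at this
  obtain ⟨a, hca, hac, hcop, hmod⟩ := hb.exists_coprime_mod_five_le_two ⌈x * b⌉₊
  have ha2 : 2 ≤ a := le_trans (Nat.lt_ceil.mpr (by exact_mod_cast h1)) hca
  have ha_lo : x * b ≤ a := (Nat.le_ceil _).trans (by exact_mod_cast hca)
  have ha_hi : (a : ℝ) < x * b + 6 := by
    have hceil := Nat.ceil_lt_add_one (mul_pos hx hb_pos).le
    have : (a : ℝ) ≤ ⌈x * b⌉₊ + 5 := by exact_mod_cast hac
    linarith
  refine ⟨a / b, ⟨a, b, hcop, ha2, (le_max_right B N0).trans hBb, hmod, rfl⟩, ?_⟩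
  rw [Real.dist_eq, abs_lt, lt_sub_iff_add_lt, sub_lt_iff_lt_add', lt_div_iff₀ hb_pos,
    div_lt_iff₀ hb_pos]
  constructor <;> nlinarith

lemma Ici_zero_subset_closure_admissibleRatios (N0 : ℕ) :
    Ici 0 ⊆ closure (admissibleRatios N0) := by
  have hpos : Ioi 0 ⊆ closure (admissibleRatios N0) := fun x hx =>
    Metric.mem_closure_iff.mpr fun ε hε => by
      obtain ⟨q, hq, hqx⟩ := exists_mem_admissibleRatios_dist_lt N0 hx hε
      exact ⟨q, hq, dist_comm x q ▸ hqx⟩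
  simpa only [closure_Ioi, closure_closure] using closure_mono hpos

theorem stmt_0_general (n m : ℕ) (N0 : ℕ) :
    (∃ a b : ℕ → ℕ,
      (∀ k, Nat.Coprime (a k) (b k) ∧ 2 ≤ a k ∧ N0 ≤ b k ∧ (a k + b k) % 5 ≤ 2) ∧
      Tendsto (fun k => (a k : ℝ) / (b k : ℝ)) atTop (nhds ((n : ℝ) / (m : ℝ)))) ∧
    (∀ x : ℝ, 0 < x →
      x ∈ closure {q : ℝ | ∃ a b : ℕ, Nat.Coprime a b ∧ 2 ≤ a ∧ N0 ≤ b ∧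
        (a + b) % 5 ≤ 2 ∧ q = (a : ℝ) / (b : ℝ)}) := by
  refine ⟨?_, fun x hx => Ici_zero_subset_closure_admissibleRatios N0 hx.le⟩
  have hnm : (n : ℝ) / m ∈ closure (admissibleRatios N0) :=
    Ici_zero_subset_closure_admissibleRatios N0 (mem_Ici.mpr (by positivity))
  obtain ⟨u, hu, hlim⟩ := mem_closure_iff_seq_limit.mp hnm
  choose a b hcop ha hb hmod hab using hu
  exact ⟨a, b, fun k => ⟨hcop k, ha k, hb k, hmod k⟩, by simpa only [← hab] using hlim⟩

theorem stmt_0 (n m : ℕ) (hn : n.Prime) (hm : m.Prime) (N0 : ℕ) (hN0 : 2 ≤ N0) :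
    (∃ a b : ℕ → ℕ,
      (∀ k, Nat.Coprime (a k) (b k) ∧ 2 ≤ a k ∧ N0 ≤ b k ∧ (a k + b k) % 5 ≤ 2) ∧
      Tendsto (fun k => (a k : ℝ) / (b k : ℝ)) atTop (nhds ((n : ℝ) / (m : ℝ)))) ∧
    (∀ x : ℝ, 0 < x →
      x ∈ closure {q : ℝ | ∃ a b : ℕ, Nat.Coprime a b ∧ 2 ≤ a ∧ N0 ≤ b ∧
        (a + b) % 5 ≤ 2 ∧ q = (a : ℝ) / (b : ℝ)}) :=
  stmt_0_general n m N0
end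

section
/- Let n ≥ 2 and m ≥ 2 be coprime integers such that (n + m) mod 5 ≤ 2. Then there is no vector γ = (γ₁, γ₂, γ₃, γ₄) of natural numbers with γ₁+γ₂+γ₃+γ₄ < n + m satisfying n(γ₁ − γ₃) = m(γ₄ − γ₂) ≠ 0. Furthermore, if γ₁+γ₂+γ₃+γ₄ = n + m, then n(γ₁ − γ₃) = m(γ₄ − γ₂) ≠ 0 holds only for γ = (m, 0, 0, n) or γ = (0, n, m, 0). -/
theorem stmt_2 (n m : ℕ) (hn : 2 ≤ n) (hm : 2 ≤ m) (hcop : Nat.Coprime n m)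
    (h5 : (n + m) % 5 ≤ 2) :
    (∀ γ₁ γ₂ γ₃ γ₄ : ℕ, γ₁ + γ₂ + γ₃ + γ₄ < n + m →
      ¬ ((n : ℤ) * ((γ₁ : ℤ) - γ₃) = (m : ℤ) * ((γ₄ : ℤ) - γ₂) ∧
         (n : ℤ) * ((γ₁ : ℤ) - γ₃) ≠ 0)) ∧
    (∀ γ₁ γ₂ γ₃ γ₄ : ℕ, γ₁ + γ₂ + γ₃ + γ₄ = n + m →
      (n : ℤ) * ((γ₁ : ℤ) - γ₃) = (m : ℤ) * ((γ₄ : ℤ) - γ₂) →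
      (n : ℤ) * ((γ₁ : ℤ) - γ₃) ≠ 0 →
      (γ₁, γ₂, γ₃, γ₄) = (m, 0, 0, n) ∨ (γ₁, γ₂, γ₃, γ₄) = (0, n, m, 0)) := by
  have hm0 : (0:ℤ) < m := by exact_mod_cast (by omega : 0 < m)
  have hn0 : (0:ℤ) < n := by exact_mod_cast (by omega : 0 < n)
  have key : ∀ γ₁ γ₂ γ₃ γ₄ : ℕ,
      (n : ℤ) * ((γ₁ : ℤ) - γ₃) = (m : ℤ) * ((γ₄ : ℤ) - γ₂) →
      (n : ℤ) * ((γ₁ : ℤ) - γ₃) ≠ 0 →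
      (n + m ≤ γ₁ + γ₂ + γ₃ + γ₄) ∧
      (γ₁ + γ₂ + γ₃ + γ₄ = n + m →
        (γ₁ = m ∧ γ₂ = 0 ∧ γ₃ = 0 ∧ γ₄ = n) ∨
        (γ₁ = 0 ∧ γ₂ = n ∧ γ₃ = m ∧ γ₄ = 0)) := by
    intro γ₁ γ₂ γ₃ γ₄ heq hne
    have hcop' : IsCoprime (m : ℤ) (n : ℤ) := by
      rw [Int.isCoprime_iff_gcd_eq_one]
      simpa [Int.gcd_natCast_natCast, Nat.gcd_comm] using hcop
    obtain ⟨k, hk⟩ : (m:ℤ) ∣ (γ₁:ℤ) - γ₃ := hcop'.dvd_of_dvd_mul_left ⟨_, heq⟩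
    have hb : (γ₄ : ℤ) - γ₂ = n * k := by
      apply mul_left_cancel₀ (ne_of_gt hm0)
      rw [← heq, hk]; ring
    have hk0 : k ≠ 0 := by
      rintro rfl
      exact hne (by rw [hk]; ring)
    have c1 : (0:ℤ) ≤ (γ₁:ℤ) := Int.natCast_nonneg _
    have c2 : (0:ℤ) ≤ (γ₂:ℤ) := Int.natCast_nonneg _
    have c3 : (0:ℤ) ≤ (γ₃:ℤ) := Int.natCast_nonneg _
    have c4 : (0:ℤ) ≤ (γ₄:ℤ) := Int.natCast_nonneg _
    rcases hk0.lt_or_gt with hneg | hpos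
    · have hk1 : (1:ℤ) ≤ -k := by omega
      have g3 : (m:ℤ) * (-k) ≤ γ₃ := by linarith [hk]
      have g2 : (n:ℤ) * (-k) ≤ γ₂ := by linarith [hb]
      have gm : (m:ℤ) ≤ (m:ℤ) * (-k) := le_mul_of_one_le_right hm0.le hk1
      have gn : (n:ℤ) ≤ (n:ℤ) * (-k) := le_mul_of_one_le_right hn0.le hk1
      constructor
      · have : (n:ℤ) + m ≤ γ₁ + γ₂ + γ₃ + γ₄ := by linarith
        exact_mod_cast this
      · intro hsum
        have hsum' : (γ₁:ℤ) + γ₂ + γ₃ + γ₄ = n + m := by exact_mod_cast hsum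
        have hub : ((n:ℤ) + m) * (-k) ≤ (n:ℤ) + m := by
          have : (n:ℤ) * (-k) + m * (-k) ≤ γ₂ + γ₃ := by linarith
          nlinarith
        have hkm1 : k = -1 := by
          have h1 : ((n:ℤ) + m) * (-k) ≤ ((n:ℤ) + m) * 1 := by linarith
          have := le_of_mul_le_mul_left h1 (by linarith : (0:ℤ) < (n:ℤ) + m)
          omega
        subst hkm1
        right
        simp only [mul_neg_one] at hk hb
        constructor
        · omega
        constructor
        · omega
        constructor
        · omega
        · omega
    · have hk1 : 1 ≤ k := by omega
      have g1 : (m:ℤ) * k ≤ γ₁ := by linarith [hk]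
      have g4 : (n:ℤ) * k ≤ γ₄ := by linarith [hb]
      have gm : (m:ℤ) ≤ (m:ℤ) * k := le_mul_of_one_le_right hm0.le hk1
      have gn : (n:ℤ) ≤ (n:ℤ) * k := le_mul_of_one_le_right hn0.le hk1
      constructor
      · have : (n:ℤ) + m ≤ γ₁ + γ₂ + γ₃ + γ₄ := by linarith
        exact_mod_cast this
      · intro hsum
        have hsum' : (γ₁:ℤ) + γ₂ + γ₃ + γ₄ = n + m := by exact_mod_cast hsum
        have hub : ((n:ℤ) + m) * k ≤ (n:ℤ) + m := by
          have : (n:ℤ) * k + m * k ≤ γ₁ + γ₄ := by linarith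
          nlinarith
        have hkm1 : k = 1 := by
          have h1 : ((n:ℤ) + m) * k ≤ ((n:ℤ) + m) * 1 := by linarith
          have := le_of_mul_le_mul_left h1 (by linarith : (0:ℤ) < (n:ℤ) + m)
          omega
        subst hkm1
        left
        simp only [mul_one] at hk hb
        constructor
        · omega
        constructor
        · omega
        constructor
        · omega
        · omega
  constructor
  · rintro γ₁ γ₂ γ₃ γ₄ hlt ⟨heq, hne⟩
    have := (key γ₁ γ₂ γ₃ γ₄ heq hne).1
    omega
  · intro γ₁ γ₂ γ₃ γ₄ hsum heq hne
    rcases (key γ₁ γ₂ γ₃ γ₄ heq hne).2 hsum with ⟨h1, h2, h3, h4⟩ | ⟨h1, h2, h3, h4⟩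
    · left; simp [h1, h2, h3, h4]
    · right; simp [h1, h2, h3, h4]
end

section
/- Let k ≥ 7 and let Γ̃_k = {γ ∈ ℕ^{k−3} : Σ_{j=1}^{k−3} (j+1)γ_j = k}. Fix weights w : ℕ → ℕ defined recursively by w(2) = 0, w(3) = 5, and w(l) = w(l−1) + 3 if l ≡ 0 (mod 3), w(l) = w(l−1) + 1 otherwise (so w(l) = l + 2⌊l/3⌋ for l ≥ 3). Then for every γ ∈ Γ̃_k, Σ_j γ_j w(j+1) ≤ w(k). -/
/-- The weight `w(2) = 0`, `w(l) = l + 2⌊l/3⌋` for `l ≥ 3`. -/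
def paperWeight (l : ℕ) : ℕ := if l = 2 then 0 else l + 2 * (l / 3)

lemma pw_bound (l : ℕ) : 3 * paperWeight l + 2 * (l % 3) ≤ 5 * l := by
  unfold paperWeight; split <;> omega

lemma pw_eq (k : ℕ) (hk : k ≠ 2) : 3 * paperWeight k + 2 * (k % 3) = 5 * k := by
  unfold paperWeight; split <;> omega

theorem stmt_16 (k : ℕ) (hk : 7 ≤ k) (γ : Fin (k - 3) → ℕ)
    (hγ : ∑ j : Fin (k - 3), ((j : ℕ) + 2) * γ j = k) :
    ∑ j : Fin (k - 3), γ j * paperWeight ((j : ℕ) + 2) ≤ paperWeight k := by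
  set S := ∑ j : Fin (k - 3), γ j * (((j : ℕ) + 2) % 3) with hS
  have hmod : S % 3 = k % 3 := by
    rw [← hγ, hS, Finset.sum_nat_mod, Finset.sum_nat_mod (f := fun j : Fin (k-3) => ((j : ℕ) + 2) * γ j)]
    congr 1
    apply Finset.sum_congr rfl
    intro j _
    conv_lhs => rw [Nat.mul_mod]
    conv_rhs => rw [Nat.mul_mod]
    simp [Nat.mod_mod_of_dvd, mul_comm]
  have key : 3 * (∑ j : Fin (k - 3), γ j * paperWeight ((j : ℕ) + 2)) + 2 * S ≤
      5 * ∑ j : Fin (k - 3), ((j : ℕ) + 2) * γ j := by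
    rw [hS, Finset.mul_sum, Finset.mul_sum, Finset.mul_sum, ← Finset.sum_add_distrib]
    apply Finset.sum_le_sum
    intro j _
    nlinarith [pw_bound ((j : ℕ) + 2)]
  rw [hγ] at key
  have heq := pw_eq k (by omega)
  omega
end

section
/- Let k ≥ 6 with k ≡ 0 (mod 3), and let γ ∈ ℕ^{k−3} satisfy Σ_j (j+1)γ_j = k. Define w(2) = 0 and w(l) = l + 2⌊l/3⌋ for l ≥ 3. Then Σ_j γ_j w(j+1) = w(k) if and only if γ_j = 0 for all indices j not of the form 3s − 1 with s ≥ 1 (i.e., all parts j + 1 used are divisible by 3). -/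
theorem stmt_17 (k : ℕ) (hk : 6 ≤ k) (hk3 : k % 3 = 0) (γ : Fin (k - 3) → ℕ)
    (hγ : ∑ j : Fin (k - 3), ((j : ℕ) + 2) * γ j = k) :
    ∑ j : Fin (k - 3), γ j * paperWeight ((j : ℕ) + 2) = paperWeight k ↔
      ∀ j : Fin (k - 3), γ j ≠ 0 → ((j : ℕ) + 2) % 3 = 0 := by
  have hkw : 3 * paperWeight k = 5 * k := by
    unfold paperWeight
    have h := Nat.mod_add_div k 3
    split <;> omega
  set f : Fin (k - 3) → ℕ := fun j => γ j * (3 * paperWeight ((j : ℕ) + 2)) with hf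
  set g : Fin (k - 3) → ℕ := fun j => γ j * (5 * ((j : ℕ) + 2)) with hg
  have hle : ∀ j ∈ Finset.univ, f j ≤ g j := by
    intro j _
    apply Nat.mul_le_mul_left
    have h := Nat.mod_add_div ((j : ℕ) + 2) 3
    unfold paperWeight
    split <;> omega
  have hiff := Finset.sum_eq_sum_iff_of_le hle
  have hfs : ∑ j, f j = 3 * ∑ j : Fin (k - 3), γ j * paperWeight ((j : ℕ) + 2) := by
    rw [Finset.mul_sum]; apply Finset.sum_congr rfl; intro j _; ring
  have hgs : ∑ j, g j = 5 * k := by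
    have h5 : ∑ j, g j = 5 * ∑ j : Fin (k - 3), ((j : ℕ) + 2) * γ j := by
      rw [Finset.mul_sum]; apply Finset.sum_congr rfl; intro j _; ring
    rw [h5, hγ]
  constructor
  · intro heq j hj
    have h1 : ∑ j, f j = ∑ j, g j := by rw [hfs, hgs, heq, hkw]
    have h2 := (hiff.mp h1) j (Finset.mem_univ j)
    simp only [hf, hg] at h2
    have h3 : 3 * paperWeight ((j : ℕ) + 2) = 5 * ((j : ℕ) + 2) :=
      Nat.eq_of_mul_eq_mul_left (Nat.pos_of_ne_zero hj) h2
    have h := Nat.mod_add_div ((j : ℕ) + 2) 3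
    unfold paperWeight at h3
    split at h3 <;> omega
  · intro hcond
    have h1 : ∑ j, f j = ∑ j, g j := by
      apply hiff.mpr
      intro j _
      rcases Nat.eq_zero_or_pos (γ j) with h0 | h0
      · simp [hf, hg, h0]
      · have h3 := hcond j (Nat.pos_iff_ne_zero.mp h0)
        have h := Nat.mod_add_div ((j : ℕ) + 2) 3
        have : 3 * paperWeight ((j : ℕ) + 2) = 5 * ((j : ℕ) + 2) := by
          unfold paperWeight
          split <;> omega
        simp [hf, hg, this]
    rw [hfs, hgs, ← hkw] at h1
    omega
end
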